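/- Let p be prime and n a positive integer, and let C = <g(x) + u·p(x), u·a(x)> be a cyclic code of length n over R2 = Z_p[u]/(u^2), where all generators come from the standard construction (g(x) generates the image of C under reduction mod u and u·a(x) generates the kernel). Then a(x) divides g(x) in Z_p[x], and a(x) divides p(x)·(x^n - 1)/g(x) in Z_p[x]. -/

import Mathlib

open Polynomial

noncomputable section

/-- `Ru p k` is the ring `R_k = Z_p[u]/(u^k)`. -/
abbrev Ru (p k : ℕ) : Type := Polynomial (ZMod p) ⧸ Ideal.span {(X : Polynomial (ZMod p)) ^ k}

instance (p k : ℕ) : CommRing (Ru p k) := Ideal.Quotient.commRing _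

/-- The element `u` of `Ru p k`. -/
abbrev uR (p k : ℕ) : Ru p k := Ideal.Quotient.mk _ (X : Polynomial (ZMod p))

/-- `Rn p k n` is the ring `R_k[x]/(x^n - 1)`; its ideals are the cyclic codes of length `n`. -/
abbrev Rn (p k n : ℕ) : Type :=
  Polynomial (Ru p k) ⧸ Ideal.span {(X : Polynomial (Ru p k)) ^ n - 1}

/-- The natural ring map `Z_p[x] → R_k[x]/(x^n - 1)`. -/
abbrev liftP (p k n : ℕ) : Polynomial (ZMod p) →+* Rn p k n :=
  (Ideal.Quotient.mk _).comp (mapRingHom (algebraMap (ZMod p) (Ru p k)))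

/-- `u` as an element of `R_k[x]/(x^n - 1)`. -/
abbrev uu (p k n : ℕ) : Rn p k n := Ideal.Quotient.mk _ (C (uR p k))

/-- `x` as an element of `R_k[x]/(x^n - 1)`. -/
abbrev xx (p k n : ℕ) : Rn p k n := Ideal.Quotient.mk _ (X : Polynomial (Ru p k))

/-- `Zn p n` is the ring `Z_p[x]/(x^n - 1)`. -/
abbrev Zn (p n : ℕ) : Type :=
  Polynomial (ZMod p) ⧸ Ideal.span {(X : Polynomial (ZMod p)) ^ n - 1}

/-- The quotient map `Z_p[x] → Z_p[x]/(x^n - 1)`. -/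
abbrev mkZ (p n : ℕ) : Polynomial (ZMod p) →+* Zn p n := Ideal.Quotient.mk _

/-- The natural map `Z_p[x]/(x^n-1) → R_k[x]/(x^n-1)`. -/
def theta (p k n : ℕ) : Zn p n →+* Rn p k n :=
  Ideal.Quotient.lift _ (liftP p k n) (by
    intro f hf
    rw [Ideal.mem_span_singleton] at hf
    obtain ⟨c, rfl⟩ := hf
    have : (mapRingHom (algebraMap (ZMod p) (Ru p k))) (((X : Polynomial (ZMod p)) ^ n - 1) * c)
        ∈ Ideal.span {(X : Polynomial (Ru p k)) ^ n - 1} := by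
      rw [map_mul]
      refine Ideal.mul_mem_right _ _ (Ideal.subset_span ?_)
      simp
    exact Ideal.Quotient.eq_zero_iff_mem.mpr this)

/-- Reduction mod `u` : `R_2 = Z_p[u]/(u^2) → Z_p`. -/
def epsR (p : ℕ) : Ru p 2 →+* ZMod p :=
  Ideal.Quotient.lift _ (evalRingHom 0) (by
    intro f hf
    rw [Ideal.mem_span_singleton] at hf
    obtain ⟨c, rfl⟩ := hf
    simp)

/-- Coefficientwise reduction mod `u` : `R_2[x]/(x^n-1) → Z_p[x]/(x^n-1)`. -/
def phiTwo (p n : ℕ) : Rn p 2 n →+* Zn p n :=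
  Ideal.Quotient.lift _ ((Ideal.Quotient.mk _).comp (mapRingHom (epsR p))) (by
    intro f hf
    rw [Ideal.mem_span_singleton] at hf
    obtain ⟨c, rfl⟩ := hf
    have : (mapRingHom (epsR p)) (((X : Polynomial (Ru p 2)) ^ n - 1) * c)
        ∈ Ideal.span {(X : Polynomial (ZMod p)) ^ n - 1} := by
      rw [map_mul]
      refine Ideal.mul_mem_right _ _ (Ideal.subset_span ?_)
      simp
    simpa [Ideal.Quotient.eq_zero_iff_mem] using this)

/-!
Over `R₂ = Z_p[u]/(u²)` every polynomial is uniquely `f₀ + u f₁` with `f₀, f₁ ∈ Z_p[x]`, so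
`u q ≡ 0 mod xⁿ - 1` forces `xⁿ - 1 ∣ q`. Hence if `u q = u a (r₀ + u r₁)` in `R₂[x]/(xⁿ - 1)`
then `xⁿ - 1 ∣ q - a r₀`, and `a ∣ q` as soon as `a ∣ xⁿ - 1`. Multiplying the generator
`g + u p` by `u` and by `h = (xⁿ - 1)/g` yields `u g` and `u p h` in `C`; both lie in the kernel
of `φ`, i.e. in `⟨u a⟩`.
-/

section DualNumbers

variable {R : Type*} [CommRing R]

local notation "D" => R[X] ⧸ Ideal.span {(X : R[X]) ^ 2}

local notation "ε" => Ideal.Quotient.mk (Ideal.span {(X : R[X]) ^ 2}) X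

lemma exists_eq_algebraMap_add_mk_X_mul (r : D) :
    ∃ s t : R, r = algebraMap R D s + ε * algebraMap R D t := by
  obtain ⟨f, rfl⟩ := Ideal.Quotient.mk_surjective r
  refine ⟨f.coeff 0, f.coeff 1, ?_⟩
  rw [← Ideal.Quotient.mk_algebraMap, ← Ideal.Quotient.mk_algebraMap, algebraMap_eq, ← map_mul,
    ← map_add, Ideal.Quotient.eq, Ideal.mem_span_singleton, X_pow_dvd_iff]
  intro d hd
  interval_cases d <;> simp

lemma mk_X_mul_mk_X : ε * ε = 0 := by
  rw [← map_mul, Ideal.Quotient.eq_zero_iff_mem]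
  exact Ideal.subset_span (sq X).symm

lemma algebraMap_add_mk_X_mul_eq_zero_iff (s t : R) :
    algebraMap R D s + ε * algebraMap R D t = 0 ↔ s = 0 ∧ t = 0 := by
  refine ⟨fun h => ?_, fun ⟨hs, ht⟩ => by simp [hs, ht]⟩
  rw [← Ideal.Quotient.mk_algebraMap, ← Ideal.Quotient.mk_algebraMap, algebraMap_eq, ← map_mul,
    ← map_add, Ideal.Quotient.eq_zero_iff_mem, Ideal.mem_span_singleton, X_pow_dvd_iff] at h
  exact ⟨by simpa using h 0 two_pos, by simpa using h 1 one_lt_two⟩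

lemma Polynomial.exists_eq_map_add_C_mk_X_mul_map (F : D[X]) :
    ∃ f₀ f₁ : R[X], F = f₀.map (algebraMap R D) + C ε * f₁.map (algebraMap R D) := by
  induction F using Polynomial.induction_on' with
  | add F G hF hG =>
    obtain ⟨f₀, f₁, rfl⟩ := hF
    obtain ⟨g₀, g₁, rfl⟩ := hG
    exact ⟨f₀ + g₀, f₁ + g₁, by simp only [Polynomial.map_add]; ring⟩
  | monomial k r =>
    obtain ⟨s, t, rfl⟩ := exists_eq_algebraMap_add_mk_X_mul r
    exact ⟨monomial k s, monomial k t, by simp only [map_add, map_monomial, C_mul_monomial]⟩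

lemma Polynomial.map_add_C_mk_X_mul_map_eq_zero_iff (f₀ f₁ : R[X]) :
    f₀.map (algebraMap R D) + C ε * f₁.map (algebraMap R D) = 0 ↔ f₀ = 0 ∧ f₁ = 0 := by
  simp only [Polynomial.ext_iff, coeff_add, coeff_C_mul, coeff_map, coeff_zero,
    algebraMap_add_mk_X_mul_eq_zero_iff, forall_and]

end DualNumbers

section CyclicCodes

variable {p n : ℕ}

lemma uu_mul_uu : uu p 2 n * uu p 2 n = 0 := by
  rw [← map_mul, ← C_mul, mk_X_mul_mk_X, C_0, map_zero]

lemma liftP_X_pow_sub_one : liftP p 2 n ((X : (ZMod p)[X]) ^ n - 1) = 0 := by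
  rw [RingHom.comp_apply, Ideal.Quotient.eq_zero_iff_mem]
  exact Ideal.subset_span (by simp)

lemma Rn.exists_eq_liftP_add_uu_mul (r : Rn p 2 n) :
    ∃ r₀ r₁ : (ZMod p)[X], r = liftP p 2 n r₀ + uu p 2 n * liftP p 2 n r₁ := by
  obtain ⟨F, rfl⟩ := Ideal.Quotient.mk_surjective r
  obtain ⟨r₀, r₁, rfl⟩ := Polynomial.exists_eq_map_add_C_mk_X_mul_map F
  exact ⟨r₀, r₁, by simp⟩

lemma dvd_of_uu_mul_liftP_eq_zero {q : (ZMod p)[X]} (h : uu p 2 n * liftP p 2 n q = 0) :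
    (X ^ n - 1 : (ZMod p)[X]) ∣ q := by
  set ι := algebraMap (ZMod p) (Ru p 2)
  rw [RingHom.comp_apply, ← map_mul, Ideal.Quotient.eq_zero_iff_mem, Ideal.mem_span_singleton,
    coe_mapRingHom] at h
  obtain ⟨c, hc⟩ := h
  obtain ⟨c₀, c₁, rfl⟩ := Polynomial.exists_eq_map_add_C_mk_X_mul_map c
  have hm : (X ^ n - 1 : (ZMod p)[X]).map ι = X ^ n - 1 := by simp
  have hsplit : (-((X ^ n - 1) * c₀)).map ι + C (uR p 2) * (q - (X ^ n - 1) * c₁).map ι = 0 := by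
    simp only [Polynomial.map_neg, Polynomial.map_sub, Polynomial.map_mul, hm]
    linear_combination hc
  obtain ⟨-, hq⟩ := (Polynomial.map_add_C_mk_X_mul_map_eq_zero_iff _ _).mp hsplit
  exact ⟨c₁, sub_eq_zero.mp hq⟩

lemma dvd_of_uu_mul_liftP_mem_span {a q : (ZMod p)[X]} (ha : a ∣ X ^ n - 1)
    (h : uu p 2 n * liftP p 2 n q ∈ Ideal.span {uu p 2 n * liftP p 2 n a}) : a ∣ q := by
  obtain ⟨r, hr⟩ := Ideal.mem_span_singleton'.mp h
  obtain ⟨r₀, r₁, rfl⟩ := Rn.exists_eq_liftP_add_uu_mul r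
  have hzero : uu p 2 n * liftP p 2 n (q - a * r₀) = 0 := by
    rw [map_sub, map_mul]
    linear_combination -hr + liftP p 2 n a * liftP p 2 n r₁ * uu_mul_uu
  simpa using ((ha.trans (dvd_of_uu_mul_liftP_eq_zero hzero)).add (dvd_mul_right a r₀))

lemma phiTwo_uu : phiTwo p n (uu p 2 n) = 0 := by
  simp [phiTwo, epsR]

end CyclicCodes

theorem stmt14_general (p n : ℕ)
    (g pp a h : Polynomial (ZMod p)) (Ck : Ideal (Rn p 2 n))
    (hgh : g * h = (X : Polynomial (ZMod p)) ^ n - 1)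
    (ha : a ∣ (X : Polynomial (ZMod p)) ^ n - 1)
    (hker : {c : Rn p 2 n | c ∈ Ck ∧ phiTwo p n c = 0} =
      ↑(Ideal.span {uu p 2 n * liftP p 2 n a} : Ideal (Rn p 2 n)))
    (hmem : liftP p 2 n g + uu p 2 n * liftP p 2 n pp ∈ Ck) :
    a ∣ g ∧ a ∣ pp * h := by
  have torsion_dvd (q : (ZMod p)[X]) (hq : uu p 2 n * liftP p 2 n q ∈ Ck) : a ∣ q := by
    refine dvd_of_uu_mul_liftP_mem_span ha ?_
    rw [← SetLike.mem_coe, ← hker]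
    exact ⟨hq, by rw [map_mul, phiTwo_uu, zero_mul]⟩
  have hu : uu p 2 n * (liftP p 2 n g + uu p 2 n * liftP p 2 n pp) = uu p 2 n * liftP p 2 n g := by
    linear_combination liftP p 2 n pp * uu_mul_uu
  have hh : liftP p 2 n h * (liftP p 2 n g + uu p 2 n * liftP p 2 n pp) =
      uu p 2 n * liftP p 2 n (pp * h) := by
    have hgh' : liftP p 2 n g * liftP p 2 n h = 0 := by
      rw [← map_mul, hgh, liftP_X_pow_sub_one]
    rw [map_mul]
    linear_combination hgh'
  exact ⟨torsion_dvd g (hu ▸ Ck.mul_mem_left _ hmem),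
    torsion_dvd (pp * h) (hh ▸ Ck.mul_mem_left _ hmem)⟩

/-- Let `C = <g(x) + u p(x), u a(x)>` over `R_2 = Z_p[u]/(u^2)` come from the
standard construction: the image of `C` under reduction mod `u` is `<g(x)>` with
`g ∣ x^n - 1` (witnessed by `h` with `g h = x^n - 1`), the kernel of `φ|_C` is `<u a(x)>`
with `a ∣ x^n - 1`, and `g(x) + u p(x) ∈ C` lifts `g`.  Then `a ∣ g` and
`a ∣ p(x) (x^n - 1)/g(x)` in `Z_p[x]`. -/
theorem stmt14 (p n : ℕ) (hp : p.Prime) (hn : 0 < n)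
    (g pp a h : Polynomial (ZMod p)) (Ck : Ideal (Rn p 2 n))
    (hgh : g * h = (X : Polynomial (ZMod p)) ^ n - 1)
    (ha : a ∣ (X : Polynomial (ZMod p)) ^ n - 1)
    (himg : Ideal.map (phiTwo p n) Ck = Ideal.span {mkZ p n g})
    (hker : {c : Rn p 2 n | c ∈ Ck ∧ phiTwo p n c = 0} =
      ↑(Ideal.span {uu p 2 n * liftP p 2 n a} : Ideal (Rn p 2 n)))
    (hmem : liftP p 2 n g + uu p 2 n * liftP p 2 n pp ∈ Ck)
    (hC : Ck = Ideal.span {liftP p 2 n g + uu p 2 n * liftP p 2 n pp,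
      uu p 2 n * liftP p 2 n a}) :
    a ∣ g ∧ a ∣ pp * h :=
  stmt14_general p n g pp a h Ck hgh ha hker hmem
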